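/- arXiv:1904.11300 — 8 statements merged into one kernel-verified Lean document; each statement's English description precedes it below -/
import Mathlib

section
/- Let A ∈ B(𝓗) be self-adjoint with spectrum contained in [δ,∞) for some δ > 0. Then the map x ↦ √A·(x²·1 + A)⁻¹ is Bochner integrable on (0,∞) and (2/π) · ∫_{(0,∞)} √A·(x²·1 + A)⁻¹ dx = 1, the integral being a Bochner integral in the Banach space B(𝓗). -/
open MeasureTheory
set_option synthInstance.maxHeartbeats 1000000
set_option maxHeartbeats 1000000

variable {𝓗 : Type*} [NormedAddCommGroup 𝓗] [InnerProductSpace ℂ 𝓗] [CompleteSpace 𝓗]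

/-!
By the continuous functional calculus the integrand is `f_x(A)` with
`f_x(t) = √t / (x² + t)`, and the substitution `x = √t · y` gives
`∫₀^∞ √t / (x² + t) dx = π / 2` for every `t > 0`. On a spectrum contained in `[δ, M]`
the functions `f_x` are dominated by the integrable `√M / (x² + δ)`, so the integral
commutes with the functional calculus and equals `(π / 2) • 1`.
-/

open Set Real

lemma inv_sq_add_eq_mul_inv_one_add_sq {t : ℝ} (ht : 0 < t) (x : ℝ) :
    (x ^ 2 + t)⁻¹ = t⁻¹ * (1 + ((√t)⁻¹ * x) ^ 2)⁻¹ := by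
  rw [mul_pow, inv_pow, sq_sqrt ht.le]
  field_simp
  ring

lemma integrableOn_Ioi_inv_sq_add {t : ℝ} (ht : 0 < t) :
    IntegrableOn (fun x : ℝ => (x ^ 2 + t)⁻¹) (Ioi 0) := by
  simp_rw [inv_sq_add_eq_mul_inv_one_add_sq ht]
  refine Integrable.const_mul ?_ _
  exact (integrableOn_Ioi_comp_mul_left_iff (fun y : ℝ => (1 + y ^ 2)⁻¹) 0
    (inv_pos.mpr (sqrt_pos.mpr ht))).mpr integrable_inv_one_add_sq.integrableOn

lemma integral_Ioi_inv_sq_add {t : ℝ} (ht : 0 < t) :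
    ∫ x in Ioi (0 : ℝ), (x ^ 2 + t)⁻¹ = π / (2 * √t) := by
  have hs : 0 < √t := sqrt_pos.mpr ht
  simp_rw [inv_sq_add_eq_mul_inv_one_add_sq ht]
  rw [integral_const_mul,
    integral_comp_mul_left_Ioi (fun y : ℝ => (1 + y ^ 2)⁻¹) 0 (inv_pos.mpr hs), mul_zero,
    integral_Ioi_inv_one_add_sq, arctan_zero, sub_zero, smul_eq_mul, inv_inv]
  nth_rw 1 [← sq_sqrt ht.le]
  field_simp

lemma norm_sqrt_mul_inv_sq_add_le {x t δ M : ℝ} (hδ : 0 < δ) (ht : t ∈ Icc δ M) :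
    ‖√t * (x ^ 2 + t)⁻¹‖ ≤ √M * (x ^ 2 + δ)⁻¹ := by
  have : 0 < x ^ 2 + t := by linarith [sq_nonneg x, ht.1]
  rw [norm_of_nonneg (by positivity)]
  gcongr
  exacts [ht.2, ht.1]

lemma continuousOn_uncurry_sqrt_mul_inv_sq_add :
    ContinuousOn (Function.uncurry fun x t : ℝ => √t * (x ^ 2 + t)⁻¹) (univ ×ˢ Ioi 0) := by
  refine ContinuousOn.mul (by fun_prop) (ContinuousOn.inv₀ (by fun_prop) ?_)
  rintro ⟨x, t⟩ ⟨-, ht : 0 < t⟩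
  positivity

section CStarAlgebra

variable {A : Type*} [CStarAlgebra A] {a : A}

lemma integrableOn_Ioi_cfc_sqrt_mul_inv_sq_add (ha : IsSelfAdjoint a) {δ : ℝ} (hδ : 0 < δ)
    (hspec : spectrum ℝ a ⊆ Ici δ) :
    IntegrableOn (fun x : ℝ => cfc (fun t => √t * (x ^ 2 + t)⁻¹) a) (Ioi 0) := by
  obtain ⟨M, hM⟩ := (spectrum.isCompact (𝕜 := ℝ) a).bddAbove
  exact integrableOn_cfc measurableSet_Ioi _ _ a
    (continuousOn_uncurry_sqrt_mul_inv_sq_add.mono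
      (prod_mono (subset_univ _) (hspec.trans (Ici_subset_Ioi.mpr hδ))))
    (ae_of_all _ fun x t ht => norm_sqrt_mul_inv_sq_add_le hδ ⟨hspec ht, hM ht⟩)
    ((integrableOn_Ioi_inv_sq_add hδ).const_mul _).hasFiniteIntegral

lemma setIntegral_Ioi_cfc_sqrt_mul_inv_sq_add (ha : IsSelfAdjoint a) {δ : ℝ} (hδ : 0 < δ)
    (hspec : spectrum ℝ a ⊆ Ici δ) :
    ∫ x in Ioi (0 : ℝ), cfc (fun t => √t * (x ^ 2 + t)⁻¹) a = (π / 2) • (1 : A) := by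
  obtain ⟨M, hM⟩ := (spectrum.isCompact (𝕜 := ℝ) a).bddAbove
  rw [← cfc_setIntegral measurableSet_Ioi _ _ a
    (continuousOn_uncurry_sqrt_mul_inv_sq_add.mono
      (prod_mono (subset_univ _) (hspec.trans (Ici_subset_Ioi.mpr hδ))))
    (ae_of_all _ fun x t ht => norm_sqrt_mul_inv_sq_add_le hδ ⟨hspec ht, hM ht⟩)
    ((integrableOn_Ioi_inv_sq_add hδ).const_mul _).hasFiniteIntegral,
    ← Algebra.algebraMap_eq_smul_one, ← cfc_const (π / 2) a]
  refine cfc_congr fun t ht => ?_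
  have ht₀ : 0 < t := hδ.trans_le (hspec ht)
  have hs : √t ≠ 0 := (sqrt_pos.mpr ht₀).ne'
  rw [integral_const_mul, integral_Ioi_inv_sq_add ht₀]
  field_simp

lemma CFC.sqrt_mul_ringInverse_smul_one_add [PartialOrder A] [StarOrderedRing A]
    (ha : IsSelfAdjoint a) (hpos : ∀ t ∈ spectrum ℝ a, 0 < t) {c : ℝ} (hc : 0 ≤ c) :
    CFC.sqrt a * Ring.inverse (c • (1 : A) + a) = cfc (fun t => √t * (c + t)⁻¹) a := by
  have ha₀ : 0 ≤ a := (StarOrderedRing.nonneg_iff_spectrum_nonneg (R := ℝ) a).mpr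
    fun t ht => (hpos t ht).le
  have hne : ∀ t ∈ spectrum ℝ a, c + t ≠ 0 :=
    fun t ht => (add_pos_of_nonneg_of_pos hc (hpos t ht)).ne'
  rw [cfc_mul Real.sqrt (fun t => (c + t)⁻¹) a (hg := ContinuousOn.inv₀ (by fun_prop) hne),
    cfc_inv (fun t => c + t) a hne, cfc_const_add c (fun t => t) a, cfc_id' ℝ a,
    CFC.sqrt_eq_real_sqrt a ha₀, cfcₙ_eq_cfc, Algebra.algebraMap_eq_smul_one]

end CStarAlgebra

/-- For self-adjoint `A` with spectrum in `[δ,∞)`, `δ > 0`, the map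
`x ↦ √A·(x²·1 + A)⁻¹` is Bochner integrable on `(0,∞)` and
`(2/π) · ∫_{(0,∞)} √A·(x²·1 + A)⁻¹ dx = 1`. -/
theorem stmt_2 (A : 𝓗 →L[ℂ] 𝓗) (hA : IsSelfAdjoint A) (δ : ℝ) (hδ : 0 < δ)
    (hspec : spectrum ℝ A ⊆ Set.Ici δ) :
    IntegrableOn (fun x : ℝ => CFC.sqrt A * Ring.inverse (x ^ 2 • (1 : 𝓗 →L[ℂ] 𝓗) + A))
      (Set.Ioi 0) ∧
    (2 / Real.pi) • (∫ x in Set.Ioi (0 : ℝ),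
        CFC.sqrt A * Ring.inverse (x ^ 2 • (1 : 𝓗 →L[ℂ] 𝓗) + A)) = (1 : 𝓗 →L[ℂ] 𝓗) := by
  have hpos : ∀ t ∈ spectrum ℝ A, 0 < t := fun t ht => hδ.trans_le (hspec ht)
  simp_rw [fun x : ℝ => CFC.sqrt_mul_ringInverse_smul_one_add hA hpos (sq_nonneg x)]
  refine ⟨integrableOn_Ioi_cfc_sqrt_mul_inv_sq_add hA hδ hspec, ?_⟩
  rw [setIntegral_Ioi_cfc_sqrt_mul_inv_sq_add hA hδ hspec, smul_smul,
    div_mul_div_cancel₀ pi_ne_zero, div_self two_ne_zero, one_smul]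
end

section
/- Let H₀ ∈ B(𝓗) be self-adjoint with spectrum contained in [1,∞), let H₁ ∈ B(𝓗), and set C₁ := ‖H₁·(√H₀)⁻¹‖. Then for every δ ∈ (0,1) and every real C₂ > 0 with C₂ ≥ (C₁² − δ²)/δ², one has ‖H₁ψ‖ ≤ δ·‖H₀ψ‖ + δ·C₂·‖ψ‖ for every ψ ∈ 𝓗; in particular H₁ is H₀-bounded with relative bound δ for every δ ∈ (0,1). -/
/-!
Write `S = √H₀`, which is invertible since `1 ≤ H₀`. Then `‖H₁ψ‖ ≤ C₁ ‖Sψ‖`, and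
`‖Sψ‖² = re ⟪ψ, H₀ψ⟫` lies between `‖ψ‖²` and `‖ψ‖ ‖H₀ψ‖`. The hypothesis on `C₂` says
`C₁² ≤ δ² (1 + C₂)`, and the bound follows from the elementary inequality
`(1 + c) a b ≤ (a + c b)²` for `0 ≤ b ≤ a`, `0 ≤ c`.
-/

open MeasureTheory
open scoped InnerProductSpace
set_option synthInstance.maxHeartbeats 1000000
set_option maxHeartbeats 1000000

variable {𝓗 : Type*} [NormedAddCommGroup 𝓗] [InnerProductSpace ℂ 𝓗] [CompleteSpace 𝓗]

lemma one_add_mul_mul_le_add_mul_sq {a b c : ℝ} (hb : 0 ≤ b) (hba : b ≤ a) (hc : 0 ≤ c) :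
    (1 + c) * (a * b) ≤ (a + c * b) ^ 2 := by
  have ha : 0 ≤ a := hb.trans hba
  nlinarith [mul_nonneg ha (sub_nonneg.2 hba), mul_nonneg hc (mul_nonneg ha hb),
    mul_nonneg (mul_nonneg hc hc) (mul_nonneg hb hb)]

lemma mul_le_mul_add_mul_of_sq_le {a b s C δ c : ℝ} (ha : 0 ≤ a) (hb : 0 ≤ b) (hs : 0 ≤ s)
    (hC : 0 ≤ C) (hδ : 0 ≤ δ) (hc : 0 ≤ c) (hbs : b ^ 2 ≤ s ^ 2) (hsab : s ^ 2 ≤ a * b)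
    (hCδ : C ^ 2 ≤ δ ^ 2 * (1 + c)) :
    C * s ≤ δ * a + δ * c * b := by
  have hba : b ≤ a := by nlinarith
  have hsq : (C * s) ^ 2 ≤ (δ * a + δ * c * b) ^ 2 :=
    calc (C * s) ^ 2 = C ^ 2 * s ^ 2 := mul_pow C s 2
      _ ≤ δ ^ 2 * (1 + c) * (a * b) := mul_le_mul hCδ hsab (sq_nonneg s) (by positivity)
      _ ≤ δ ^ 2 * (a + c * b) ^ 2 := by
        rw [mul_assoc]
        exact mul_le_mul_of_nonneg_left (one_add_mul_mul_le_add_mul_sq hb hba hc) (sq_nonneg δ)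
      _ = (δ * a + δ * c * b) ^ 2 := by ring
  exact (pow_le_pow_iff_left₀ (by positivity) (by positivity) two_ne_zero).1 hsq

namespace ContinuousLinearMap

lemma norm_apply_le_norm_mul_inverse_mul {𝕜 E : Type*} [NontriviallyNormedField 𝕜]
    [NormedAddCommGroup E] [NormedSpace 𝕜 E] (T : E →L[𝕜] E) {S : E →L[𝕜] E} (hS : IsUnit S)
    (x : E) : ‖T x‖ ≤ ‖T * Ring.inverse S‖ * ‖S x‖ := by
  have hx : (T * Ring.inverse S) (S x) = T x := by
    rw [mul_apply_eq_comp, ← mul_apply_eq_comp (Ring.inverse S), Ring.inverse_mul_cancel S hS,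
      one_apply_eq_self]
  exact hx ▸ le_opNorm _ _

lemma norm_sq_le_re_inner_of_one_le {𝕜 E : Type*} [RCLike 𝕜] [NormedAddCommGroup E]
    [InnerProductSpace 𝕜 E] {A : E →L[𝕜] E} (hA : 1 ≤ A) (x : E) :
    ‖x‖ ^ 2 ≤ RCLike.re ⟪x, A x⟫_𝕜 := by
  have h := (le_def 1 A).1 hA |>.re_inner_nonneg_right x
  rw [sub_apply, one_apply_eq_self, inner_sub_right, map_sub, inner_self_eq_norm_sq] at h
  linarith

lemma norm_cfcSqrt_apply_sq {A : 𝓗 →L[ℂ] 𝓗} (hA : 0 ≤ A) (x : 𝓗) :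
    ‖CFC.sqrt A x‖ ^ 2 = RCLike.re ⟪x, A x⟫_ℂ := by
  have hS : IsSelfAdjoint (CFC.sqrt A) := IsSelfAdjoint.of_nonneg (CFC.sqrt_nonneg A)
  rw [apply_norm_sq_eq_inner_adjoint_right, ← star_eq_adjoint, hS.star_eq]
  exact congrArg (fun B : 𝓗 →L[ℂ] 𝓗 => RCLike.re ⟪x, B x⟫_ℂ) (CFC.sqrt_mul_sqrt_self A hA)

end ContinuousLinearMap

open ContinuousLinearMap in
/-- For self-adjoint `H₀` with spectrum in `[1,∞)`, `H₁ ∈ B(𝓗)`, and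
`C₁ := ‖H₁·(√H₀)⁻¹‖`: for every `δ ∈ (0,1)` and every `C₂ > 0` with
`C₂ ≥ (C₁² − δ²)/δ²`, one has `‖H₁ψ‖ ≤ δ·‖H₀ψ‖ + δ·C₂·‖ψ‖` for every `ψ`. -/
theorem stmt_4 (H₀ H₁ : 𝓗 →L[ℂ] 𝓗) (hH₀ : IsSelfAdjoint H₀)
    (hspec : spectrum ℝ H₀ ⊆ Set.Ici 1)
    (C₁ : ℝ) (hC₁ : C₁ = ‖H₁ * Ring.inverse (CFC.sqrt H₀)‖)
    (δ : ℝ) (hδ : δ ∈ Set.Ioo (0 : ℝ) 1)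
    (C₂ : ℝ) (hC₂pos : 0 < C₂) (hC₂ : (C₁ ^ 2 - δ ^ 2) / δ ^ 2 ≤ C₂) :
    ∀ ψ : 𝓗, ‖H₁ ψ‖ ≤ δ * ‖H₀ ψ‖ + δ * C₂ * ‖ψ‖ := by
  intro ψ
  have hone : 1 ≤ H₀ := (CFC.one_le_iff H₀ hH₀).2 fun x hx => hspec hx
  have hpos : IsStrictlyPositive H₀ := isStrictlyPositive_one.of_le hone
  have hs := norm_cfcSqrt_apply_sq hpos.nonneg ψ
  have hbs : ‖ψ‖ ^ 2 ≤ ‖CFC.sqrt H₀ ψ‖ ^ 2 := hs ▸ norm_sq_le_re_inner_of_one_le hone ψ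
  have hsab : ‖CFC.sqrt H₀ ψ‖ ^ 2 ≤ ‖H₀ ψ‖ * ‖ψ‖ := by
    rw [hs, mul_comm]
    exact (RCLike.re_le_norm _).trans (norm_inner_le_norm _ _)
  have hCδ : C₁ ^ 2 ≤ δ ^ 2 * (1 + C₂) := by
    rw [div_le_iff₀ (pow_pos hδ.1 2)] at hC₂
    linarith
  calc ‖H₁ ψ‖ ≤ C₁ * ‖CFC.sqrt H₀ ψ‖ :=
        hC₁ ▸ norm_apply_le_norm_mul_inverse_mul H₁ (hpos.isUnit_cfcSqrt H₀) ψ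
    _ ≤ δ * ‖H₀ ψ‖ + δ * C₂ * ‖ψ‖ :=
        mul_le_mul_add_mul_of_sq_le (norm_nonneg _) (norm_nonneg _) (norm_nonneg _)
          (hC₁ ▸ norm_nonneg _) hδ.1.le hC₂pos.le hbs hsab hCδ
end

section
/- Let H₀ ∈ B(𝓗) be self-adjoint with spectrum contained in [1+γ₀,∞) for some γ₀ > 0, and let H₁ ∈ B(𝓗). Then for every real z < 1 the operator H₀ − z·1 is invertible and ‖H₁·(H₀ − z·1)⁻¹‖ ≤ ((3γ₀ + 1)/γ₀) · ‖H₁·H₀⁻¹‖. -/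
/-!
Write `R = (H₀ - z)⁻¹`. Then `H₁ R = (H₁ H₀⁻¹) (H₀ R)` and `H₀ R = 1 + z R`. Since `H₀ - z` is
self-adjoint with spectrum in `[1 + γ₀ - z, ∞)`, the continuous functional calculus gives
`‖R‖ ≤ (1 + γ₀ - z)⁻¹`, so `‖H₀ R‖ ≤ 1 + |z| / (1 + γ₀ - z)`, which is at most `(3γ₀ + 1)/γ₀`
when `z < 1`.
-/

section Algebra

variable {A : Type*} [Ring A] [Algebra ℝ A] {a : A} {m r : ℝ}

lemma spectrum_sub_smul_one_subset_Ici (hs : spectrum ℝ a ⊆ Set.Ici m) :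
    spectrum ℝ (a - r • 1) ⊆ Set.Ici (m - r) := by
  rw [← Algebra.algebraMap_eq_smul_one, ← spectrum.sub_singleton_eq]
  rintro _ ⟨x, hx, r, rfl, rfl⟩
  simpa using hs hx

lemma isUnit_of_spectrum_subset_Ici (hm : 0 < m) (hs : spectrum ℝ a ⊆ Set.Ici m) : IsUnit a :=
  (spectrum.zero_notMem_iff ℝ).mp fun h => (hs h).not_gt hm

lemma mul_ringInverse_sub_smul_one (h : IsUnit (a - r • 1)) :
    a * Ring.inverse (a - r • 1) = 1 + r • Ring.inverse (a - r • 1) := by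
  nth_rw 1 [← sub_add_cancel a (r • 1)]
  rw [add_mul, Ring.mul_inverse_cancel _ h, smul_one_mul]

end Algebra

section CStarAlgebra

variable {A : Type*} [CStarAlgebra A] {a : A} {m r : ℝ}

lemma IsSelfAdjoint.norm_ringInverse_le (ha : IsSelfAdjoint a) (hm : 0 < m)
    (hs : spectrum ℝ a ⊆ Set.Ici m) : ‖Ring.inverse a‖ ≤ m⁻¹ := by
  rw [← cfc_ringInverse_id (R := ℝ) (a := a) (isUnit_of_spectrum_subset_Ici hm hs)]
  refine norm_cfc_le (by positivity) fun x hx => ?_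
  have hmx : m ≤ x := hs hx
  rw [norm_inv, Real.norm_of_nonneg (hm.le.trans hmx)]
  exact inv_anti₀ hm hmx

lemma IsSelfAdjoint.norm_mul_ringInverse_sub_smul_one_le (ha : IsSelfAdjoint a) (hm : 0 < m)
    (hs : spectrum ℝ a ⊆ Set.Ici m) (hr : r < m) (b : A) :
    ‖b * Ring.inverse (a - r • 1)‖ ≤ (1 + |r| / (m - r)) * ‖b * Ring.inverse a‖ := by
  nontriviality A
  have hs' : spectrum ℝ (a - r • 1) ⊆ Set.Ici (m - r) := spectrum_sub_smul_one_subset_Ici hs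
  have hunit : IsUnit (a - r • 1) := isUnit_of_spectrum_subset_Ici (sub_pos.mpr hr) hs'
  have hsa : IsSelfAdjoint (a - r • 1) := ha.sub ((IsSelfAdjoint.all r).smul (.one A))
  have hfactor : b * Ring.inverse (a - r • 1) =
      b * Ring.inverse a * (a * Ring.inverse (a - r • 1)) := by
    rw [mul_assoc, ← mul_assoc (Ring.inverse a),
      Ring.inverse_mul_cancel _ (isUnit_of_spectrum_subset_Ici hm hs), one_mul]
  have hresolvent : ‖a * Ring.inverse (a - r • 1)‖ ≤ 1 + |r| / (m - r) := by
    rw [mul_ringInverse_sub_smul_one hunit, div_eq_mul_inv]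
    calc ‖1 + r • Ring.inverse (a - r • 1)‖
        ≤ ‖(1 : A)‖ + |r| * ‖Ring.inverse (a - r • 1)‖ := by
          rw [← Real.norm_eq_abs, ← norm_smul]; exact norm_add_le _ _
      _ ≤ 1 + |r| * (m - r)⁻¹ := by
          rw [norm_one]; gcongr; exact hsa.norm_ringInverse_le (sub_pos.mpr hr) hs'
  rw [hfactor, mul_comm _ ‖_‖]
  exact (norm_mul_le _ _).trans (by gcongr)

end CStarAlgebra

lemma one_add_abs_div_le_of_lt_one {γ z : ℝ} (hγ : 0 < γ) (hz : z < 1) :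
    1 + |z| / (1 + γ - z) ≤ (3 * γ + 1) / γ := by
  have hd : 0 < 1 + γ - z := by linarith
  rw [add_div' _ _ _ hd.ne', div_le_div_iff₀ hd hγ]
  rcases abs_cases z with ⟨h, _⟩ | ⟨h, _⟩ <;> rw [h] <;> nlinarith

variable {𝓗 : Type*} [NormedAddCommGroup 𝓗] [InnerProductSpace ℂ 𝓗] [CompleteSpace 𝓗]

/-- For self-adjoint `H₀` with spectrum in `[1+γ₀,∞)`, `γ₀ > 0`, and any `H₁`:
for every real `z < 1` the operator `H₀ − z·1` is invertible and
`‖H₁·(H₀ − z·1)⁻¹‖ ≤ ((3γ₀ + 1)/γ₀) · ‖H₁·H₀⁻¹‖`. -/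
theorem stmt_5 (H₀ H₁ : 𝓗 →L[ℂ] 𝓗) (hH₀ : IsSelfAdjoint H₀) (γ₀ : ℝ) (hγ₀ : 0 < γ₀)
    (hspec : spectrum ℝ H₀ ⊆ Set.Ici (1 + γ₀)) (z : ℝ) (hz : z < 1) :
    IsUnit (H₀ - z • (1 : 𝓗 →L[ℂ] 𝓗)) ∧
    ‖H₁ * Ring.inverse (H₀ - z • (1 : 𝓗 →L[ℂ] 𝓗))‖ ≤
      ((3 * γ₀ + 1) / γ₀) * ‖H₁ * Ring.inverse H₀‖ := by
  have hz' : z < 1 + γ₀ := by linarith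
  refine ⟨isUnit_of_spectrum_subset_Ici (sub_pos.mpr hz')
    (spectrum_sub_smul_one_subset_Ici hspec), ?_⟩
  calc _ ≤ (1 + |z| / (1 + γ₀ - z)) * ‖H₁ * Ring.inverse H₀‖ :=
        hH₀.norm_mul_ringInverse_sub_smul_one_le (by linarith) hspec hz' H₁
    _ ≤ _ := by gcongr; exact one_add_abs_div_le_of_lt_one hγ₀ hz
end

section
/- Let H₀, H₁ ∈ B(𝓗) be self-adjoint with spectrum of H₀ contained in [1+γ₀,∞) for some γ₀ > 0. If a ∈ ℝ satisfies |a| · ((3γ₀ + 1)/γ₀) · ‖H₁·H₀⁻¹‖ < 1, then the spectrum of H₀ + a·H₁ is contained in [1,∞). -/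
open MeasureTheory
set_option synthInstance.maxHeartbeats 1000000
set_option maxHeartbeats 1000000

variable {𝓗 : Type*} [NormedAddCommGroup 𝓗] [InnerProductSpace ℂ 𝓗] [CompleteSpace 𝓗]

/-- If `H₀, H₁` are self-adjoint, the spectrum of `H₀` is contained in `[1+γ₀,∞)`
with `γ₀ > 0`, and `|a| · ((3γ₀ + 1)/γ₀) · ‖H₁·H₀⁻¹‖ < 1`, then the spectrum
of `H₀ + a·H₁` is contained in `[1,∞)`. -/
theorem stmt_6 (H₀ H₁ : 𝓗 →L[ℂ] 𝓗) (hH₀ : IsSelfAdjoint H₀) (hH₁ : IsSelfAdjoint H₁)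
    (γ₀ : ℝ) (hγ₀ : 0 < γ₀) (hspec : spectrum ℝ H₀ ⊆ Set.Ici (1 + γ₀))
    (a : ℝ) (ha : |a| * ((3 * γ₀ + 1) / γ₀) * ‖H₁ * Ring.inverse H₀‖ < 1) :
    spectrum ℝ (H₀ + a • H₁) ⊆ Set.Ici 1 := by
  intro l hl
  by_contra hcon
  rw [Set.mem_Ici, not_le] at hcon
  -- H₀ is a unit
  have h0unit : IsUnit H₀ := by
    rw [← spectrum.zero_notMem_iff ℝ]
    intro h
    have := hspec h
    rw [Set.mem_Ici] at this
    linarith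
  -- `l` is not in the spectrum of H₀
  have hlnot : l ∉ spectrum ℝ H₀ := by
    intro h
    have := hspec h
    rw [Set.mem_Ici] at this
    linarith
  have hT : IsUnit (algebraMap ℝ (𝓗 →L[ℂ] 𝓗) l - H₀) := by
    rwa [spectrum.notMem_iff] at hlnot
  obtain ⟨T, hTval⟩ := hT
  -- facts about points of the spectrum
  have hne : ∀ t ∈ spectrum ℝ H₀, l - t ≠ 0 := by
    intro t ht h
    have h1 := hspec ht
    rw [Set.mem_Ici] at h1
    have h2 := sub_eq_zero.mp h
    linarith
  have hg_cont : ContinuousOn (fun t : ℝ => t * (l - t)⁻¹) (spectrum ℝ H₀) :=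
    continuousOn_id.mul ((continuousOn_const.sub continuousOn_id).inv₀ hne)
  have hsub_cont : ContinuousOn (fun t : ℝ => l - t) (spectrum ℝ H₀) :=
    continuousOn_const.sub continuousOn_id
  -- T as cfc
  have hTcfc : (T : 𝓗 →L[ℂ] 𝓗) = cfc (fun t : ℝ => l - t) H₀ := by
    have h1 := cfc_sub (fun _ : ℝ => l) (fun s : ℝ => s) H₀ continuousOn_const continuousOn_id
    rw [cfc_const l H₀ hH₀, cfc_id' ℝ H₀ hH₀] at h1
    rw [hTval]
    exact h1.symm
  -- key identity: cfc g H₀ * T = H₀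
  have hkey : cfc (fun t : ℝ => t * (l - t)⁻¹) H₀ * (T : 𝓗 →L[ℂ] 𝓗) = H₀ := by
    rw [hTcfc]
    have h2 := cfc_mul (fun t : ℝ => t * (l - t)⁻¹) (fun t : ℝ => l - t) H₀ hg_cont hsub_cont
    rw [← h2]
    have h3 : cfc (fun t : ℝ => t * (l - t)⁻¹ * (l - t)) H₀ = cfc (id : ℝ → ℝ) H₀ := by
      apply cfc_congr
      intro t ht
      simp only [id]
      field_simp [hne t ht]
    exact h3.trans (cfc_id ℝ H₀ hH₀)
  -- hence H₀ * T⁻¹ = cfc g H₀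
  have hHTinv : H₀ * (↑T⁻¹ : 𝓗 →L[ℂ] 𝓗) = cfc (fun t : ℝ => t * (l - t)⁻¹) H₀ := by
    calc H₀ * (↑T⁻¹ : 𝓗 →L[ℂ] 𝓗)
        = cfc (fun t : ℝ => t * (l - t)⁻¹) H₀ * ((T : 𝓗 →L[ℂ] 𝓗) * ↑T⁻¹) := by
          rw [← mul_assoc, hkey]
      _ = cfc (fun t : ℝ => t * (l - t)⁻¹) H₀ := by rw [T.mul_inv, mul_one]
  -- norm bound on H₀ * T⁻¹
  have hbound : ‖H₀ * (↑T⁻¹ : 𝓗 →L[ℂ] 𝓗)‖ ≤ (1 + γ₀) / γ₀ := by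
    rw [hHTinv]
    apply norm_cfc_le (by positivity)
    intro t ht
    have ht' := hspec ht
    rw [Set.mem_Ici] at ht'
    have htl : l < t := by linarith
    have htl' : 0 < t - l := by linarith
    rw [Real.norm_eq_abs, abs_mul, abs_inv, abs_of_pos (by linarith : (0:ℝ) < t),
      abs_of_neg (by linarith : l - t < 0), neg_sub, ← div_eq_mul_inv,
      div_le_div_iff₀ htl' hγ₀]
    nlinarith [mul_lt_mul_of_pos_left hcon (by linarith : (0:ℝ) < 1 + γ₀)]
  -- Ring.inverse H₀ facts
  have hRinv : Ring.inverse H₀ * H₀ = 1 := Ring.inverse_mul_cancel _ h0unit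
  -- factor H₁ * T⁻¹
  have hfact : H₁ * (↑T⁻¹ : 𝓗 →L[ℂ] 𝓗) =
      (H₁ * Ring.inverse H₀) * (H₀ * (↑T⁻¹ : 𝓗 →L[ℂ] 𝓗)) := by
    rw [mul_assoc, ← mul_assoc (Ring.inverse H₀), hRinv, one_mul]
  -- the small perturbation has norm < 1
  have hsmall : ‖a • (H₁ * (↑T⁻¹ : 𝓗 →L[ℂ] 𝓗))‖ < 1 := by
    rw [norm_smul, Real.norm_eq_abs, hfact]
    calc |a| * ‖(H₁ * Ring.inverse H₀) * (H₀ * (↑T⁻¹ : 𝓗 →L[ℂ] 𝓗))‖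
        ≤ |a| * (‖H₁ * Ring.inverse H₀‖ * ((1 + γ₀) / γ₀)) := by
          refine mul_le_mul_of_nonneg_left ?_ (abs_nonneg a)
          exact (norm_mul_le _ _).trans
            (mul_le_mul_of_nonneg_left hbound (norm_nonneg _))
      _ = |a| * ‖H₁ * Ring.inverse H₀‖ * ((1 + γ₀) / γ₀) := by ring
      _ ≤ |a| * ‖H₁ * Ring.inverse H₀‖ * ((3 * γ₀ + 1) / γ₀) := by
          refine mul_le_mul_of_nonneg_left ?_ (by positivity)
          rw [div_le_div_iff₀ hγ₀ hγ₀]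
          nlinarith
      _ = |a| * ((3 * γ₀ + 1) / γ₀) * ‖H₁ * Ring.inverse H₀‖ := by ring
      _ < 1 := ha
  -- build the unit
  set K := a • (H₁ * (↑T⁻¹ : 𝓗 →L[ℂ] 𝓗)) with hK
  have hUnit : IsUnit (1 - K) := (Units.oneSub K hsmall).isUnit
  have hfinal : algebraMap ℝ (𝓗 →L[ℂ] 𝓗) l - (H₀ + a • H₁) = (1 - K) * (T : 𝓗 →L[ℂ] 𝓗) := by
    rw [sub_mul, one_mul, hK, smul_mul_assoc, mul_assoc, T.inv_mul, mul_one, hTval]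
    abel
  have : IsUnit (algebraMap ℝ (𝓗 →L[ℂ] 𝓗) l - (H₀ + a • H₁)) := by
    rw [hfinal]
    exact hUnit.mul T.isUnit
  rw [spectrum.mem_iff] at hl
  exact hl this
end

section
/- Let H₀, H₁ ∈ B(𝓗) be self-adjoint, let c ∈ ℝ, set H := H₀ + c·H₁, and assume that the spectra of H₀ and of H are both contained in [1,∞). With K₀ := ‖H₁·(√H₀)⁻¹‖, one has ‖H₁·(√H)⁻¹‖ ≤ K₀·(1 + 3·|c|·K₀); that is, H₁ is (√H)-bounded with a bound controlled by its (√H₀)-bound, uniformly in the perturbation coefficient c on bounded sets. -/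
/-!
Write `T := (√H)⁻¹`. Since `T H T = 1` and `H₀ = H - c H₁`, the C⋆-identity gives
`‖√H₀ T‖² = ‖T H₀ T‖ = ‖1 - c T H₁ T‖ ≤ 1 + |c| ‖H₁ T‖`, using `‖T‖ ≤ 1` because `1 ≤ √H`.
Factoring `H₁ T = (H₁ (√H₀)⁻¹) (√H₀ T)` yields `x² ≤ K₀² (1 + |c| x)` for `x := ‖H₁ T‖`,
and this quadratic inequality forces `x ≤ K₀ (1 + |c| K₀)`.
-/

lemma le_mul_one_add_mul_of_sq_le {x K c : ℝ} (hK : 0 ≤ K) (hc : 0 ≤ c)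
    (h : x ^ 2 ≤ K ^ 2 * (1 + c * x)) : x ≤ K * (1 + c * K) := by
  by_contra! hlt
  have hKx : K ≤ x := le_trans (by nlinarith) hlt.le
  have hxpos : 0 < x := (by positivity : 0 ≤ K * (1 + c * K)).trans_lt hlt
  nlinarith [mul_le_mul_of_nonneg_left hKx hK, mul_lt_mul_of_pos_left hlt hxpos]

namespace CStarAlgebra

open CFC

variable {A : Type*} [CStarAlgebra A] [PartialOrder A] [StarOrderedRing A]

lemma one_le_of_spectrum_subset_Ici_one {a : A} (ha : IsSelfAdjoint a)
    (h : spectrum ℝ a ⊆ Set.Ici 1) : 1 ≤ a := by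
  simpa using (algebraMap_le_iff_le_spectrum (r := (1 : ℝ)) ha).mpr h

lemma one_le_sqrt {a : A} (ha : 1 ≤ a) : 1 ≤ sqrt a := by
  simpa using sqrt_le_sqrt 1 a ha

lemma norm_ringInverse_le_one {s : A} (hs : 1 ≤ s) : ‖Ring.inverse s‖ ≤ 1 := by
  have hpos : IsStrictlyPositive s := IsStrictlyPositive.of_le (by simp) hs
  rw [norm_le_one_iff_of_nonneg _ hpos.ringInverse.nonneg]
  simpa using ringInverse_le_ringInverse hs (by simp)

lemma ringInverse_sqrt_mul_self_mul_ringInverse_sqrt {a : A} (ha : IsStrictlyPositive a) :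
    Ring.inverse (sqrt a) * a * Ring.inverse (sqrt a) = 1 := by
  have hu : IsUnit (sqrt a) := ha.isUnit_cfcSqrt
  nth_rw 2 [← sqrt_mul_sqrt_self a]
  rw [← mul_assoc, Ring.inverse_mul_cancel _ hu, one_mul, Ring.mul_inverse_cancel _ hu]

lemma sq_norm_sqrt_mul {a t : A} (ha : 0 ≤ a) (ht : IsSelfAdjoint t) :
    ‖sqrt a * t‖ ^ 2 = ‖t * a * t‖ := by
  rw [sq, ← CStarRing.norm_star_mul_self, star_mul, ht.star_eq,
    (IsSelfAdjoint.of_nonneg (sqrt_nonneg a)).star_eq]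
  conv_rhs => rw [← sqrt_mul_sqrt_self a]
  simp only [mul_assoc]

lemma sq_norm_sqrt_mul_ringInverse_sqrt_add_smul_le {H₀ H₁ : A} {c : ℝ} (h₀ : 0 ≤ H₀)
    (h : 1 ≤ H₀ + c • H₁) :
    ‖sqrt H₀ * Ring.inverse (sqrt (H₀ + c • H₁))‖ ^ 2
      ≤ 1 + |c| * ‖H₁ * Ring.inverse (sqrt (H₀ + c • H₁))‖ := by
  nontriviality A
  set H := H₀ + c • H₁
  set T := Ring.inverse (sqrt H)
  have hH : IsStrictlyPositive H := IsStrictlyPositive.of_le (by simp) h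
  have hTsa : IsSelfAdjoint T := (IsStrictlyPositive.sqrt H hH).ringInverse.isSelfAdjoint
  have hT : ‖T‖ ≤ 1 := norm_ringInverse_le_one (one_le_sqrt h)
  have hconj : T * H₀ * T = 1 - c • (T * H₁ * T) := by
    have hH₀ : H₀ = H - c • H₁ := by simp [H]
    rw [hH₀, mul_sub, sub_mul, ringInverse_sqrt_mul_self_mul_ringInverse_sqrt hH,
      mul_smul_comm, smul_mul_assoc]
  calc ‖sqrt H₀ * T‖ ^ 2 = ‖1 - c • (T * H₁ * T)‖ := by
        rw [sq_norm_sqrt_mul h₀ hTsa, hconj]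
    _ ≤ ‖(1 : A)‖ + |c| * (‖T‖ * ‖H₁ * T‖) := by
        grw [norm_sub_le, norm_smul, mul_assoc, norm_mul_le T, Real.norm_eq_abs]
    _ ≤ 1 + |c| * ‖H₁ * T‖ := by
        grw [norm_one, hT, one_mul]

theorem norm_mul_ringInverse_sqrt_add_smul_le {H₀ H₁ : A} {c : ℝ} (h₀ : IsStrictlyPositive H₀)
    (h : 1 ≤ H₀ + c • H₁) :
    ‖H₁ * Ring.inverse (sqrt (H₀ + c • H₁))‖
      ≤ ‖H₁ * Ring.inverse (sqrt H₀)‖ * (1 + |c| * ‖H₁ * Ring.inverse (sqrt H₀)‖) := by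
  set T := Ring.inverse (sqrt (H₀ + c • H₁))
  set K := ‖H₁ * Ring.inverse (sqrt H₀)‖
  have hfactor : ‖H₁ * T‖ ≤ K * ‖sqrt H₀ * T‖ := by
    calc ‖H₁ * T‖ = ‖H₁ * Ring.inverse (sqrt H₀) * (sqrt H₀ * T)‖ := by
          rw [mul_assoc, ← mul_assoc (Ring.inverse _),
            Ring.inverse_mul_cancel _ h₀.isUnit_cfcSqrt, one_mul]
      _ ≤ K * ‖sqrt H₀ * T‖ := norm_mul_le _ _
  refine le_mul_one_add_mul_of_sq_le (norm_nonneg _) (abs_nonneg c) ?_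
  calc ‖H₁ * T‖ ^ 2 ≤ K ^ 2 * ‖sqrt H₀ * T‖ ^ 2 := by
        rw [← mul_pow]; gcongr
    _ ≤ K ^ 2 * (1 + |c| * ‖H₁ * T‖) := by
        gcongr; exact sq_norm_sqrt_mul_ringInverse_sqrt_add_smul_le h₀.nonneg h

end CStarAlgebra

variable {𝓗 : Type*} [NormedAddCommGroup 𝓗] [InnerProductSpace ℂ 𝓗] [CompleteSpace 𝓗]

open CStarAlgebra in
/-- Let `H := H₀ + c·H₁` with `H₀, H₁` self-adjoint and spectra of `H₀` and `H`
in `[1,∞)`.  With `K₀ := ‖H₁·(√H₀)⁻¹‖`, one has `‖H₁·(√H)⁻¹‖ ≤ K₀·(1 + 3·|c|·K₀)`. -/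
theorem stmt_8 (H₀ H₁ : 𝓗 →L[ℂ] 𝓗) (hH₀ : IsSelfAdjoint H₀) (hH₁ : IsSelfAdjoint H₁)
    (c : ℝ) (H : 𝓗 →L[ℂ] 𝓗) (hH : H = H₀ + c • H₁)
    (hspec₀ : spectrum ℝ H₀ ⊆ Set.Ici 1) (hspec : spectrum ℝ H ⊆ Set.Ici 1)
    (K₀ : ℝ) (hK₀ : K₀ = ‖H₁ * Ring.inverse (CFC.sqrt H₀)‖) :
    ‖H₁ * Ring.inverse (CFC.sqrt H)‖ ≤ K₀ * (1 + 3 * |c| * K₀) := by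
  have hHsa : IsSelfAdjoint H := by
    rw [hH, IsSelfAdjoint, star_add, star_smul, star_trivial c, hH₀.star_eq, hH₁.star_eq]
  have h₀ : IsStrictlyPositive H₀ :=
    .of_le (by simp) (one_le_of_spectrum_subset_Ici_one hH₀ hspec₀)
  have h : 1 ≤ H₀ + c • H₁ := hH ▸ one_le_of_spectrum_subset_Ici_one hHsa hspec
  have hK₀nn : 0 ≤ K₀ := hK₀ ▸ norm_nonneg _
  calc ‖H₁ * Ring.inverse (CFC.sqrt H)‖ ≤ K₀ * (1 + |c| * K₀) := by
        subst hH hK₀; exact norm_mul_ringInverse_sqrt_add_smul_le h₀ h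
    _ ≤ K₀ * (1 + 3 * |c| * K₀) := by gcongr; nlinarith [abs_nonneg c]
end

section
/- Let H, H₁ ∈ B(𝓗) with H self-adjoint and spectrum of H contained in [1,∞). Then the map x ↦ x²·(x²·1 + H)⁻¹·H₁·(x²·1 + H)⁻¹·(√H)⁻¹ is Bochner integrable on (0,∞) and ‖(2/π) · ∫_{(0,∞)} x²·(x²·1 + H)⁻¹·H₁·(x²·1 + H)⁻¹·(√H)⁻¹ dx‖ ≤ ‖H₁·(√H)⁻¹‖. -/
/-!
Everything in sight is a function of `H`, so `(√H)⁻¹` commutes with the resolvent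
`R x = (x² + H)⁻¹` and the integrand equals `x² • R x (H₁ (√H)⁻¹) R x`. Since the spectrum of `H`
lies in `[1, ∞)`, the continuous functional calculus gives `‖R x‖ ≤ (x² + 1)⁻¹`, so the integrand
is bounded by `‖H₁ (√H)⁻¹‖ (1 + x²)⁻¹`, whose integral over `(0, ∞)` is `‖H₁ (√H)⁻¹‖ π / 2`.
-/

open MeasureTheory

variable {𝓗 : Type*} [NormedAddCommGroup 𝓗] [InnerProductSpace ℂ 𝓗] [CompleteSpace 𝓗]

section Integral

variable {E : Type*} [NormedAddCommGroup E]

lemma integrableOn_Ioi_of_norm_le_inv_one_add_sq {f : ℝ → E} {C : ℝ}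
    (hf : AEStronglyMeasurable f (volume.restrict (Set.Ioi 0)))
    (hC : ∀ x, ‖f x‖ ≤ C * (1 + x ^ 2)⁻¹) : IntegrableOn f (Set.Ioi 0) :=
  (integrable_inv_one_add_sq.integrableOn.const_mul C).mono' hf (ae_of_all _ hC)

lemma norm_integral_Ioi_le_of_norm_le_inv_one_add_sq [NormedSpace ℝ E] {f : ℝ → E} {C : ℝ}
    (hC : ∀ x, ‖f x‖ ≤ C * (1 + x ^ 2)⁻¹) : ‖∫ x in Set.Ioi 0, f x‖ ≤ C * (Real.pi / 2) :=
  calc ‖∫ x in Set.Ioi 0, f x‖ ≤ ∫ x in Set.Ioi 0, C * (1 + x ^ 2)⁻¹ :=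
        norm_integral_le_of_norm_le (integrable_inv_one_add_sq.integrableOn.const_mul C)
          (ae_of_all _ hC)
    _ = C * (Real.pi / 2) := by
        rw [integral_const_mul, integral_Ioi_inv_one_add_sq, Real.arctan_zero, sub_zero]

end Integral

lemma sq_mul_inv_sq_add_one_sq_le (x : ℝ) : x ^ 2 * (x ^ 2 + 1)⁻¹ ^ 2 ≤ (1 + x ^ 2)⁻¹ :=
  calc x ^ 2 * (x ^ 2 + 1)⁻¹ ^ 2 = x ^ 2 / (x ^ 2 + 1) * (1 + x ^ 2)⁻¹ := by ring
    _ ≤ 1 * (1 + x ^ 2)⁻¹ := by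
        gcongr
        exact div_le_one_of_le₀ (by linarith) (by positivity)
    _ = (1 + x ^ 2)⁻¹ := one_mul _

lemma norm_mul_mul_self_le_of_norm_le {R : Type*} [SeminormedRing R] {r k : R} {c : ℝ}
    (hr : ‖r‖ ≤ c) : ‖r * k * r‖ ≤ c ^ 2 * ‖k‖ :=
  calc ‖r * k * r‖ ≤ ‖r‖ * ‖k‖ * ‖r‖ := norm_mul₃_le
    _ ≤ c * ‖k‖ * c := by
        have hc : 0 ≤ c := (norm_nonneg r).trans hr
        gcongr
    _ = c ^ 2 * ‖k‖ := by ring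

lemma Continuous.ringInverse {X R : Type*} [TopologicalSpace X] [NormedRing R]
    [HasSummableGeomSeries R] {f : X → R} (hf : Continuous f) (hunit : ∀ x, IsUnit (f x)) :
    Continuous fun x => Ring.inverse (f x) :=
  continuous_iff_continuousAt.mpr fun x => by
    obtain ⟨u, hu⟩ := hunit x
    exact (hu ▸ NormedRing.inverse_continuousAt u).comp hf.continuousAt

namespace CStarAlgebra

variable {A : Type*} [CStarAlgebra A] {a : A}

lemma smul_one_add_eq_cfc (ha : IsSelfAdjoint a) (c : ℝ) : c • (1 : A) + a = cfc (c + ·) a := by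
  rw [cfc_const_add c (fun t => t) a, cfc_id' ℝ a, Algebra.algebraMap_eq_smul_one]

section Resolvent

variable {δ c : ℝ} (ha : IsSelfAdjoint a) (hspec : spectrum ℝ a ⊆ Set.Ici δ) (hc : 0 < c + δ)
include ha hspec hc

lemma isUnit_smul_one_add : IsUnit (c • (1 : A) + a) := by
  rw [smul_one_add_eq_cfc ha, isUnit_cfc_iff (c + ·) a]
  intro t ht
  linarith [Set.mem_Ici.mp (hspec ht)]

lemma norm_ringInverse_smul_one_add_le : ‖Ring.inverse (c • (1 : A) + a)‖ ≤ (c + δ)⁻¹ := by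
  have hle : ∀ t ∈ spectrum ℝ a, c + δ ≤ c + t := fun t ht => by
    linarith [Set.mem_Ici.mp (hspec ht)]
  rw [smul_one_add_eq_cfc ha, ← cfc_inv (c + ·) a fun t ht => by linarith [hle t ht]]
  refine norm_cfc_le (by positivity) fun t ht => ?_
  rw [Real.norm_of_nonneg (inv_nonneg.mpr (by linarith [hle t ht]))]
  exact inv_anti₀ hc (hle t ht)

end Resolvent

lemma continuous_ringInverse_sq_smul_one_add {δ : ℝ} (ha : IsSelfAdjoint a)
    (hspec : spectrum ℝ a ⊆ Set.Ici δ) (hδ : 0 < δ) :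
    Continuous fun x : ℝ => Ring.inverse (x ^ 2 • (1 : A) + a) :=
  Continuous.ringInverse (by fun_prop) fun x =>
    isUnit_smul_one_add ha hspec (by positivity)

variable [PartialOrder A] [StarOrderedRing A]

lemma commute_ringInverse_smul_one_add_ringInverse_sqrt (a : A) (c : ℝ) :
    Commute (Ring.inverse (c • (1 : A) + a)) (Ring.inverse (CFC.sqrt a)) := by
  have h : Commute a (c • (1 : A) + a) := ((Commute.one_right a).smul_right c).add_right (.refl a)
  rw [CFC.sqrt_eq_cfc]
  exact (h.cfc_nnreal NNReal.sqrt).symm.ringInverse_ringInverse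

lemma norm_sq_smul_resolvent_mul_resolvent_mul_ringInverse_sqrt_le (ha : IsSelfAdjoint a)
    (hspec : spectrum ℝ a ⊆ Set.Ici 1) (b : A) (x : ℝ) :
    ‖x ^ 2 • (Ring.inverse (x ^ 2 • (1 : A) + a) * b * Ring.inverse (x ^ 2 • (1 : A) + a) *
      Ring.inverse (CFC.sqrt a))‖ ≤ ‖b * Ring.inverse (CFC.sqrt a)‖ * (1 + x ^ 2)⁻¹ := by
  set R := Ring.inverse (x ^ 2 • (1 : A) + a)
  set S := Ring.inverse (CFC.sqrt a)
  have hRS : R * b * R * S = R * (b * S) * R := by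
    rw [mul_assoc _ R S, (commute_ringInverse_smul_one_add_ringInverse_sqrt a _).eq, ← mul_assoc,
      mul_assoc R b S]
  have hR : ‖R‖ ≤ (x ^ 2 + 1)⁻¹ := norm_ringInverse_smul_one_add_le ha hspec (by positivity)
  calc ‖x ^ 2 • (R * b * R * S)‖ = x ^ 2 * ‖R * (b * S) * R‖ := by
        rw [hRS, norm_smul, Real.norm_of_nonneg (by positivity)]
    _ ≤ x ^ 2 * ((x ^ 2 + 1)⁻¹ ^ 2 * ‖b * S‖) := by
        gcongr
        exact norm_mul_mul_self_le_of_norm_le hR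
    _ = x ^ 2 * (x ^ 2 + 1)⁻¹ ^ 2 * ‖b * S‖ := by ring
    _ ≤ (1 + x ^ 2)⁻¹ * ‖b * S‖ := by
        gcongr
        exact sq_mul_inv_sq_add_one_sq_le x
    _ = ‖b * S‖ * (1 + x ^ 2)⁻¹ := mul_comm _ _

end CStarAlgebra

/-- For `H, H₁ ∈ B(𝓗)` with `H` self-adjoint and spectrum in `[1,∞)`, the map
`x ↦ x²·(x²·1 + H)⁻¹·H₁·(x²·1 + H)⁻¹·(√H)⁻¹` is Bochner integrable on `(0,∞)` and
the norm of `(2/π)` times its integral is at most `‖H₁·(√H)⁻¹‖`. -/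
theorem stmt_13 (H H₁ : 𝓗 →L[ℂ] 𝓗) (hH : IsSelfAdjoint H)
    (hspec : spectrum ℝ H ⊆ Set.Ici 1) :
    IntegrableOn
      (fun x : ℝ => x ^ 2 •
        (Ring.inverse (x ^ 2 • (1 : 𝓗 →L[ℂ] 𝓗) + H) * H₁ *
          Ring.inverse (x ^ 2 • (1 : 𝓗 →L[ℂ] 𝓗) + H) * Ring.inverse (CFC.sqrt H)))
      (Set.Ioi 0) ∧
    ‖(2 / Real.pi) • ∫ x in Set.Ioi (0 : ℝ),
        x ^ 2 • (Ring.inverse (x ^ 2 • (1 : 𝓗 →L[ℂ] 𝓗) + H) * H₁ *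
          Ring.inverse (x ^ 2 • (1 : 𝓗 →L[ℂ] 𝓗) + H) * Ring.inverse (CFC.sqrt H))‖ ≤
      ‖H₁ * Ring.inverse (CFC.sqrt H)‖ := by
  have hR := CStarAlgebra.continuous_ringInverse_sq_smul_one_add hH hspec one_pos
  have hbound :=
    CStarAlgebra.norm_sq_smul_resolvent_mul_resolvent_mul_ringInverse_sqrt_le hH hspec H₁
  refine ⟨integrableOn_Ioi_of_norm_le_inv_one_add_sq
    (Continuous.aestronglyMeasurable (by fun_prop)) hbound, ?_⟩
  rw [norm_smul, Real.norm_of_nonneg (by positivity)]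
  calc 2 / Real.pi * ‖∫ x in Set.Ioi (0 : ℝ), _‖
      ≤ 2 / Real.pi * (‖H₁ * Ring.inverse (CFC.sqrt H)‖ * (Real.pi / 2)) := by
        gcongr
        exact norm_integral_Ioi_le_of_norm_le_inv_one_add_sq hbound
    _ = ‖H₁ * Ring.inverse (CFC.sqrt H)‖ := by field_simp
end

section
/- Let H₀, H₁ ∈ B(𝓗) be self-adjoint, let ε > 0 and η > 0, let g be a switching function, set H(t) := H₀ + ε·g(η·t)·H₁, assume spectrum of H(t) is contained in [1,∞) for every t ∈ ℝ, let U be a unitary propagator for the family t ↦ H(t), and let n ∈ ℕ. Then the supremum over all (t,r) ∈ ℝ² of ‖((√H(t))⁻¹)^n · U(t,r) · (√H(r))^n‖ equals the supremum of the same quantity over (t,r) ∈ [0, 1/η] × [0, 1/η]. -/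
open MeasureTheory
open scoped ENNReal
set_option synthInstance.maxHeartbeats 1000000
set_option maxHeartbeats 1000000

variable {𝓗 : Type*} [NormedAddCommGroup 𝓗] [InnerProductSpace ℂ 𝓗] [CompleteSpace 𝓗]

/-- A unitary propagator for the family `t ↦ H t` of bounded self-adjoint operators:
every `U t r` is unitary, `U t t = 1`, `U t r * U r u = U t u`, and for each fixed `r`
the map `t ↦ U t r` is differentiable in operator norm with `i·(d/dt)U(t,r) = H(t)·U(t,r)`,
i.e. the derivative is `−i·(H(t)·U(t,r))`. -/
def IsUnitaryPropagator (H : ℝ → 𝓗 →L[ℂ] 𝓗) (U : ℝ → ℝ → 𝓗 →L[ℂ] 𝓗) : Prop :=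
  (∀ t r, U t r ∈ unitary (𝓗 →L[ℂ] 𝓗)) ∧ (∀ t, U t t = 1) ∧
  (∀ t r u, U t r * U r u = U t u) ∧
  (∀ r t, HasDerivAt (fun s => U s r) (-(Complex.I • (H t * U t r))) t)

/-
`H(t)` is constant for `t ≤ 0`, where `g` vanishes, and for `t ≥ 1/η`, since `g' = 0` on `[1, ∞)`.
Where `H` is constant, equal to `A`, the propagator commutes with `A` (its commutator with `A`
solves a linear ODE with zero initial value), hence with `√A` and its inverse. Writing
`U(t,r) = U(t,t') U(t',r') U(r',r)` with `t', r'` the projections of `t, r` onto `[0, 1/η]`, the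
outer unitary factors pass through the weights and drop out of the norm, so every value on `ℝ²`
is already attained on the square.
-/

open Set

theorem Commute.ringInverse_right {M₀ : Type*} [MonoidWithZero M₀] {a b : M₀}
    (h : Commute a b) : Commute a (Ring.inverse b) := by
  by_cases hb : IsUnit b
  · obtain ⟨u, rfl⟩ := hb
    rw [Ring.inverse_unit]
    exact h.units_inv_right
  · rw [Ring.inverse_non_unit b hb]
    exact Commute.zero_right a

theorem Commute.cfcSqrt_right {A : Type*} [CStarAlgebra A] [PartialOrder A] [StarOrderedRing A]
    {a b : A} (h : Commute a b) : Commute a (CFC.sqrt b) := by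
  rw [CFC.sqrt_eq_cfc]
  exact (h.symm.cfc_nnreal _).symm

theorem eq_of_deriv_eq_zero_on_Ici {g : ℝ → ℝ} (hg : Differentiable ℝ g) {a : ℝ}
    (hg' : ∀ s, a ≤ s → deriv g s = 0) {s : ℝ} (hs : a ≤ s) : g s = g a :=
  constant_of_has_deriv_right_zero hg.continuous.continuousOn
    (fun x hx => by simpa [hg' x hx.1] using (hg x).hasDerivAt.hasDerivWithinAt) s ⟨hs, le_rfl⟩

theorem iSup_iSup_eq_biSup_biSup_of_projIcc {α β : Type*} [CompleteLattice α] [LinearOrder β]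
    {a b : β} (hab : a ≤ b) {f : β → β → α}
    (hf : ∀ t r, f t r = f (projIcc a b hab t) (projIcc a b hab r)) :
    ⨆ t, ⨆ r, f t r = ⨆ t ∈ Icc a b, ⨆ r ∈ Icc a b, f t r := by
  refine le_antisymm (iSup₂_le fun t r => ?_) (iSup₂_le fun t _ => iSup₂_le fun r _ => ?_)
  · rw [hf]
    exact le_iSup₂_of_le (projIcc a b hab t : β) (projIcc a b hab t).2 <|
      le_iSup₂_of_le (projIcc a b hab r : β) (projIcc a b hab r).2 le_rfl
  · exact le_iSup₂_of_le t r le_rfl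

theorem apply_projIcc_eq {α β : Type*} [LinearOrder α] {f : α → β} {a b : α} (hab : a ≤ b)
    (hl : ∀ t ≤ a, f t = f a) (hr : ∀ t, b ≤ t → f t = f b) (t : α) :
    f (projIcc a b hab t) = f t := by
  rcases le_or_gt t a with hta | hat
  · rw [projIcc_of_le_left hab hta, hl t hta]
  rcases le_or_gt b t with hbt | htb
  · rw [projIcc_of_right_le hab hbt, hr t hbt]
  · rw [projIcc_of_mem hab ⟨hat.le, htb.le⟩]

noncomputable def weightedPropagator (H : ℝ → 𝓗 →L[ℂ] 𝓗) (U : ℝ → ℝ → 𝓗 →L[ℂ] 𝓗) (n : ℕ)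
    (t r : ℝ) : 𝓗 →L[ℂ] 𝓗 :=
  Ring.inverse (CFC.sqrt (H t)) ^ n * U t r * CFC.sqrt (H r) ^ n

namespace IsUnitaryPropagator

variable {H : ℝ → 𝓗 →L[ℂ] 𝓗} {U : ℝ → ℝ → 𝓗 →L[ℂ] 𝓗}

theorem mem_unitary (hU : IsUnitaryPropagator H U) (t r : ℝ) :
    U t r ∈ unitary (𝓗 →L[ℂ] 𝓗) :=
  hU.1 t r

theorem apply_self (hU : IsUnitaryPropagator H U) (t : ℝ) : U t t = 1 :=
  hU.2.1 t

theorem mul_apply (hU : IsUnitaryPropagator H U) (t r u : ℝ) : U t r * U r u = U t u :=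
  hU.2.2.1 t r u

theorem hasDerivAt (hU : IsUnitaryPropagator H U) (r t : ℝ) :
    HasDerivAt (fun s => U s r) (-(Complex.I • (H t * U t r))) t :=
  hU.2.2.2 r t

-- The commutator `U s a * A - A * U s a` solves `f' = -i A f` on `[a, b]` with `f a = 0`.
theorem commute_of_forall_Icc (hU : IsUnitaryPropagator H U) {A : 𝓗 →L[ℂ] 𝓗} {a b : ℝ}
    (hab : a ≤ b) (hA : ∀ s ∈ Icc a b, H s = A) : Commute (U b a) A := by
  set f : ℝ → 𝓗 →L[ℂ] 𝓗 := fun s => U s a * A - A * U s a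
  have hf : ∀ s, HasDerivAt f
      (-(Complex.I • (H s * U s a)) * A - A * -(Complex.I • (H s * U s a))) s :=
    fun s => ((hU.hasDerivAt a s).mul_const A).sub ((hU.hasDerivAt a s).const_mul A)
  have hf' : ∀ s ∈ Ico a b,
      -(Complex.I • (H s * U s a)) * A - A * -(Complex.I • (H s * U s a)) =
        -Complex.I • (A * f s) := by
    intro s hs
    simp only [f, hA s (Ico_subset_Icc_self hs), neg_smul, mul_neg, neg_mul, sub_neg_eq_add,
      mul_sub, smul_sub, smul_mul_assoc, mul_smul_comm, mul_assoc]
  have hzero := eq_zero_of_abs_deriv_le_mul_abs_self_of_eq_zero_right (K := ‖A‖)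
    (fun s _ => (hf s).continuousAt.continuousWithinAt) (fun s _ => (hf s).hasDerivWithinAt)
    (by simp [f, hU.apply_self a])
    (fun s hs => by rw [hf' s hs, norm_smul]; simpa using norm_mul_le _ _)
    b ⟨hab, le_rfl⟩
  exact sub_eq_zero.mp hzero

theorem commute_swap (hU : IsUnitaryPropagator H U) {A : 𝓗 →L[ℂ] 𝓗} {t s : ℝ}
    (h : Commute (U t s) A) : Commute (U s t) A := by
  let u : (𝓗 →L[ℂ] 𝓗)ˣ :=
    ⟨U t s, U s t, by rw [hU.mul_apply, hU.apply_self], by rw [hU.mul_apply, hU.apply_self]⟩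
  exact Commute.units_inv_left (u := u) h

theorem commute_of_forall_ordConnected (hU : IsUnitaryPropagator H U) {A : 𝓗 →L[ℂ] 𝓗}
    {S : Set ℝ} (hS : S.OrdConnected) (hA : ∀ s ∈ S, H s = A) {t s : ℝ} (ht : t ∈ S)
    (hs : s ∈ S) : Commute (U t s) A := by
  rcases le_total s t with hst | hts
  · exact hU.commute_of_forall_Icc hst fun x hx => hA x (hS.out hs ht hx)
  · exact hU.commute_swap (hU.commute_of_forall_Icc hts fun x hx => hA x (hS.out ht hs hx))

theorem commute_projIcc (hU : IsUnitaryPropagator H U) {a b : ℝ} (hab : a ≤ b)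
    (hl : ∀ t ≤ a, H t = H a) (hr : ∀ t, b ≤ t → H t = H b) (t : ℝ) :
    Commute (U t (projIcc a b hab t)) (H (projIcc a b hab t)) := by
  rcases le_or_gt t a with hta | hat
  · rw [projIcc_of_le_left hab hta]
    exact hU.commute_of_forall_ordConnected ordConnected_Iic hl hta (le_refl a)
  rcases le_or_gt b t with hbt | htb
  · rw [projIcc_of_right_le hab hbt]
    exact hU.commute_of_forall_ordConnected ordConnected_Ici hr hbt (le_refl b)
  · rw [projIcc_of_mem hab ⟨hat.le, htb.le⟩, hU.apply_self]
    exact Commute.one_left _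

theorem norm_weightedPropagator_eq (hU : IsUnitaryPropagator H U) (n : ℕ) {t r t' r' : ℝ}
    (ht : H t = H t') (hr : H r = H r') (hUt : Commute (U t t') (H t'))
    (hUr : Commute (U r' r) (H r')) :
    ‖weightedPropagator H U n t r‖ = ‖weightedPropagator H U n t' r'‖ := by
  have hL := hUt.cfcSqrt_right.ringInverse_right.pow_right n
  have hR := hUr.cfcSqrt_right.pow_right n
  have hconj : weightedPropagator H U n t r =
      U t t' * weightedPropagator H U n t' r' * U r' r := by
    rw [weightedPropagator, weightedPropagator, ht, hr, ← hU.mul_apply t t' r,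
      ← hU.mul_apply t' r' r]
    simp only [mul_assoc]
    rw [← hR.eq, hL.left_comm]
  rw [hconj, CStarRing.norm_mul_mem_unitary _ (hU.mem_unitary r' r),
    CStarRing.norm_mem_unitary_mul _ (hU.mem_unitary t t')]

end IsUnitaryPropagator

theorem stmt_16_general (H₀ H₁ : 𝓗 →L[ℂ] 𝓗)
    (ε η : ℝ) (hη : 0 < η)
    (g : ℝ → ℝ) (hg : ContDiff ℝ 1 g) (hg0 : ∀ s ≤ (0 : ℝ), g s = 0)
    (hg' : ∀ s ∉ Set.Ioo (0 : ℝ) 1, deriv g s = 0)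
    (H : ℝ → 𝓗 →L[ℂ] 𝓗) (hH : ∀ t, H t = H₀ + (ε * g (η * t)) • H₁)
    (U : ℝ → ℝ → 𝓗 →L[ℂ] 𝓗) (hU : IsUnitaryPropagator H U) (n : ℕ) :
    (⨆ t : ℝ, ⨆ r : ℝ,
        (‖(Ring.inverse (CFC.sqrt (H t))) ^ n * U t r * (CFC.sqrt (H r)) ^ n‖₊ : ℝ≥0∞)) =
    ⨆ t ∈ Set.Icc (0 : ℝ) (1 / η), ⨆ r ∈ Set.Icc (0 : ℝ) (1 / η),
        (‖(Ring.inverse (CFC.sqrt (H t))) ^ n * U t r * (CFC.sqrt (H r)) ^ n‖₊ : ℝ≥0∞) := by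
  have hc : 0 ≤ 1 / η := by positivity
  have hg_one : ∀ s, 1 ≤ s → g s = g 1 :=
    fun s => eq_of_deriv_eq_zero_on_Ici (hg.differentiable one_ne_zero)
      fun x hx => hg' x fun hx' => hx'.2.not_ge hx
  have hl : ∀ t ≤ 0, H t = H 0 := fun t ht => by
    rw [hH, hH, mul_zero, hg0 0 le_rfl, hg0 _ (mul_nonpos_of_nonneg_of_nonpos hη.le ht)]
  have hr : ∀ t, 1 / η ≤ t → H t = H (1 / η) := fun t ht => by
    rw [hH, hH, mul_one_div_cancel hη.ne', hg_one _ ((div_le_iff₀' hη).mp ht)]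
  refine iSup_iSup_eq_biSup_biSup_of_projIcc hc fun t r => ?_
  exact congrArg _ <| NNReal.eq <| hU.norm_weightedPropagator_eq n
    (apply_projIcc_eq hc hl hr t).symm (apply_projIcc_eq hc hl hr r).symm
    (hU.commute_projIcc hc hl hr t) (hU.commute_swap (hU.commute_projIcc hc hl hr r))

/-- For `H(t) := H₀ + ε·g(η·t)·H₁` with spectrum in `[1,∞)`, a unitary propagator `U`
and `n ∈ ℕ`, the supremum over `(t,r) ∈ ℝ²` of `‖((√H(t))⁻¹)^n·U(t,r)·(√H(r))^n‖`
equals the supremum of the same quantity over `(t,r) ∈ [0,1/η]²`. -/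
theorem stmt_16 (H₀ H₁ : 𝓗 →L[ℂ] 𝓗) (hH₀ : IsSelfAdjoint H₀) (hH₁ : IsSelfAdjoint H₁)
    (ε η : ℝ) (hε : 0 < ε) (hη : 0 < η)
    (g : ℝ → ℝ) (hg : ContDiff ℝ 1 g) (hg0 : ∀ s ≤ (0 : ℝ), g s = 0)
    (hg' : ∀ s ∉ Set.Ioo (0 : ℝ) 1, deriv g s = 0)
    (H : ℝ → 𝓗 →L[ℂ] 𝓗) (hH : ∀ t, H t = H₀ + (ε * g (η * t)) • H₁)
    (hspec : ∀ t, spectrum ℝ (H t) ⊆ Set.Ici 1)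
    (U : ℝ → ℝ → 𝓗 →L[ℂ] 𝓗) (hU : IsUnitaryPropagator H U) (n : ℕ) :
    (⨆ t : ℝ, ⨆ r : ℝ,
        (‖(Ring.inverse (CFC.sqrt (H t))) ^ n * U t r * (CFC.sqrt (H r)) ^ n‖₊ : ℝ≥0∞)) =
    ⨆ t ∈ Set.Icc (0 : ℝ) (1 / η), ⨆ r ∈ Set.Icc (0 : ℝ) (1 / η),
        (‖(Ring.inverse (CFC.sqrt (H t))) ^ n * U t r * (CFC.sqrt (H r)) ^ n‖₊ : ℝ≥0∞) :=
  stmt_16_general H₀ H₁ ε η hη g hg hg0 hg' H hH U hU n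
end

section
/- Let H₀, H₁ ∈ B(𝓗) be self-adjoint, let ε > 0 and η > 0, let g be a switching function, set H(t) := H₀ + ε·g(η·t)·H₁ and φ(s) := ∫₀^s g(u) du, and let U be a unitary propagator for the family t ↦ H(t). Define V(s,u) := e^{i(ε/η)φ(s)H₁} · U(s/η, u/η) · e^{−i(ε/η)φ(u)H₁} and Ĥ(s) := e^{i(ε/η)φ(s)H₁} · H₀ · e^{−i(ε/η)φ(s)H₁}. Then every V(s,u) is unitary, V(s,s) = 1 and V(s,r)·V(r,u) = V(s,u) for all s,r,u ∈ ℝ, and for each fixed u the map s ↦ V(s,u) is differenti2able in operator norm with i·η·(d/ds)V(s,u) = Ĥ(s)·V(s,u). -/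
open MeasureTheory
set_option synthInstance.maxHeartbeats 1000000
set_option maxHeartbeats 1000000

variable {𝓗 : Type*} [NormedAddCommGroup 𝓗] [InnerProductSpace ℂ 𝓗] [CompleteSpace 𝓗]

/-! Conjugating a propagator by a differentiable unitary family `W` yields a propagator for
`W H W⋆ + i W' W⋆` (product rule plus `W⋆ W = 1`). For `W(t) = e^{iψ(t)B}` with `B` self-adjoint
the correction is `-ψ'(t) B`. Rescaling time by `η` and taking `ψ = (ε/η)φ`, `ψ' = (ε/η)g`, this
correction cancels the perturbation `η⁻¹ε g H₁`, which commutes with `W`, leaving `η⁻¹ Ĥ`. -/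

section ImaginaryExponential

variable {𝔸 : Type*} [NormedRing 𝔸] [NormedAlgebra ℂ 𝔸]

theorem HasDerivAt.exp_ofReal_mul_I_smul [CompleteSpace 𝔸] {ψ : ℝ → ℝ} {ψ' t : ℝ}
    (hψ : HasDerivAt ψ ψ' t) (B : 𝔸) :
    HasDerivAt (fun t => NormedSpace.exp (((ψ t : ℂ) * Complex.I) • B))
      (((ψ' : ℂ) * Complex.I) • B * NormedSpace.exp (((ψ t : ℂ) * Complex.I) • B)) t := by
  have := (hasDerivAt_exp_smul_const' (𝕂 := ℂ) (Complex.I • B) (ψ t)).scomp t hψ.ofReal_comp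
  simp only [mul_smul]
  exact this.congr_deriv (by simp only [smul_mul_assoc])

theorem Complex.ofReal_mul_I_mem_skewAdjoint (r : ℝ) : (r : ℂ) * Complex.I ∈ skewAdjoint ℂ := by
  simp [skewAdjoint.mem_iff, Complex.conj_ofReal]

variable [StarRing 𝔸] [ContinuousStar 𝔸] [StarModule ℂ 𝔸] {B : 𝔸}

theorem IsSelfAdjoint.star_exp_ofReal_mul_I_smul (hB : IsSelfAdjoint B) (r : ℝ) :
    star (NormedSpace.exp (((r : ℂ) * Complex.I) • B)) =
      NormedSpace.exp ((-((r : ℂ) * Complex.I)) • B) := by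
  rw [NormedSpace.star_exp,
    skewAdjoint.mem_iff.mp (hB.smul_mem_skewAdjoint (Complex.ofReal_mul_I_mem_skewAdjoint r)), neg_smul]

theorem IsSelfAdjoint.exp_ofReal_mul_I_smul_mem_unitary [CompleteSpace 𝔸] (hB : IsSelfAdjoint B)
    (r : ℝ) : NormedSpace.exp (((r : ℂ) * Complex.I) • B) ∈ unitary 𝔸 :=
  let +nondep : NormedAlgebra ℚ 𝔸 := .restrictScalars ℚ ℂ 𝔸
  NormedSpace.exp_mem_unitary_of_mem_skewAdjoint
    (hB.smul_mem_skewAdjoint (Complex.ofReal_mul_I_mem_skewAdjoint r))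

theorem IsSelfAdjoint.exp_ofReal_mul_I_smul_mul_self_mul_star [CompleteSpace 𝔸]
    (hB : IsSelfAdjoint B) (r : ℝ) :
    NormedSpace.exp (((r : ℂ) * Complex.I) • B) * B *
      star (NormedSpace.exp (((r : ℂ) * Complex.I) • B)) = B := by
  rw [(((Commute.refl B).smul_left _).exp_left).eq, mul_assoc,
    Unitary.mul_star_self_of_mem (hB.exp_ofReal_mul_I_smul_mem_unitary r), mul_one]

end ImaginaryExponential

namespace IsUnitaryPropagator

variable {H : ℝ → 𝓗 →L[ℂ] 𝓗} {U : ℝ → ℝ → 𝓗 →L[ℂ] 𝓗}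

theorem comp_mul (hU : IsUnitaryPropagator H U) (c : ℝ) :
    IsUnitaryPropagator (fun t => c • H (c * t)) (fun t r => U (c * t) (c * r)) := by
  obtain ⟨hunit, hone, hmul, hderiv⟩ := hU
  refine ⟨fun t r => hunit _ _, fun t => hone _, fun t r u => hmul _ _ _, fun r t => ?_⟩
  refine ((hderiv (c * r) (c * t)).scomp t ((hasDerivAt_id t).const_mul c)).congr_deriv ?_
  rw [mul_one, smul_mul_assoc, smul_neg, smul_comm]

theorem conj (hU : IsUnitaryPropagator H U) {W W' : ℝ → 𝓗 →L[ℂ] 𝓗}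
    (hW : ∀ t, W t ∈ unitary (𝓗 →L[ℂ] 𝓗)) (hW' : ∀ t, HasDerivAt W (W' t) t) :
    IsUnitaryPropagator (fun t => W t * H t * star (W t) + Complex.I • (W' t * star (W t)))
      (fun t r => W t * U t r * star (W r)) := by
  obtain ⟨hunit, hone, hmul, hderiv⟩ := hU
  have hWW (t : ℝ) : star (W t) * W t = 1 := Unitary.star_mul_self_of_mem (hW t)
  refine ⟨fun t r => ?_, fun t => ?_, fun t r u => ?_, fun r t => ?_⟩
  · exact mul_mem (mul_mem (hW t) (hunit t r)) (Unitary.star_mem (hW r))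
  · simp only [hone, mul_one, Unitary.mul_star_self_of_mem (hW t)]
  · calc W t * U t r * star (W r) * (W r * U r u * star (W u))
        = W t * (U t r * (star (W r) * W r) * U r u) * star (W u) := by simp only [mul_assoc]
      _ = W t * U t u * star (W u) := by rw [hWW, mul_one, hmul]
  · refine (((hW' t).mul (hderiv r t)).mul_const (star (W r))).congr_deriv ?_
    have hWW' (X) : star (W t) * (W t * X) = X := by rw [← mul_assoc, hWW, one_mul]
    simp only [add_mul, mul_assoc, smul_mul_assoc, hWW', smul_add, smul_smul, Complex.I_mul_I,
      neg_smul, one_smul, neg_add, neg_neg, mul_neg, neg_mul, mul_smul_comm]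
    abel

theorem conj_exp (hU : IsUnitaryPropagator H U) {B : 𝓗 →L[ℂ] 𝓗} (hB : IsSelfAdjoint B)
    {ψ ψ' : ℝ → ℝ} (hψ : ∀ t, HasDerivAt ψ (ψ' t) t) :
    IsUnitaryPropagator
      (fun t => NormedSpace.exp (((ψ t : ℂ) * Complex.I) • B) * H t *
        star (NormedSpace.exp (((ψ t : ℂ) * Complex.I) • B)) - ψ' t • B)
      (fun t r => NormedSpace.exp (((ψ t : ℂ) * Complex.I) • B) * U t r *
        star (NormedSpace.exp (((ψ r : ℂ) * Complex.I) • B))) := by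
  convert hU.conj (fun t => hB.exp_ofReal_mul_I_smul_mem_unitary (ψ t))
    (fun t => (hψ t).exp_ofReal_mul_I_smul B) using 3 with t
  rw [mul_assoc _ (NormedSpace.exp _),
    Unitary.mul_star_self_of_mem (hB.exp_ofReal_mul_I_smul_mem_unitary (ψ t)), mul_one, smul_smul,
    mul_comm Complex.I, mul_assoc (ψ' t : ℂ), Complex.I_mul_I, mul_neg_one, neg_smul,
    Complex.coe_smul, sub_eq_add_neg]

end IsUnitaryPropagator

theorem stmt_19_general (H₀ H₁ : 𝓗 →L[ℂ] 𝓗) (hH₁ : IsSelfAdjoint H₁)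
    (ε η : ℝ) (hη : 0 < η)
    (g : ℝ → ℝ) (hg : ContDiff ℝ 1 g)
    (H : ℝ → 𝓗 →L[ℂ] 𝓗) (hH : ∀ t, H t = H₀ + (ε * g (η * t)) • H₁)
    (φ : ℝ → ℝ) (hφ : ∀ s, φ s = ∫ u in (0 : ℝ)..s, g u)
    (U : ℝ → ℝ → 𝓗 →L[ℂ] 𝓗) (hU : IsUnitaryPropagator H U)
    (V : ℝ → ℝ → 𝓗 →L[ℂ] 𝓗)
    (hV : ∀ s u, V s u =
      NormedSpace.exp (((((ε / η) * φ s : ℝ) : ℂ) * Complex.I) • H₁) * U (s / η) (u / η) *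
      NormedSpace.exp ((-((((ε / η) * φ u : ℝ) : ℂ) * Complex.I)) • H₁))
    (Hhat : ℝ → 𝓗 →L[ℂ] 𝓗)
    (hHhat : ∀ s, Hhat s =
      NormedSpace.exp (((((ε / η) * φ s : ℝ) : ℂ) * Complex.I) • H₁) * H₀ *
      NormedSpace.exp ((-((((ε / η) * φ s : ℝ) : ℂ) * Complex.I)) • H₁)) :
    (∀ s u, V s u ∈ unitary (𝓗 →L[ℂ] 𝓗)) ∧
    (∀ s, V s s = 1) ∧
    (∀ s r u, V s r * V r u = V s u) ∧
    (∀ u s, HasDerivAt (fun s' => V s' u)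
      (((-Complex.I) / (η : ℂ)) • (Hhat s * V s u)) s) := by
  set W : ℝ → 𝓗 →L[ℂ] 𝓗 :=
    fun s => NormedSpace.exp (((((ε / η) * φ s : ℝ) : ℂ) * Complex.I) • H₁)
  have hφ' (s : ℝ) : HasDerivAt φ (g s) s := by
    rw [funext hφ]
    exact (hg.continuous.integral_hasStrictDerivAt 0 s).hasDerivAt
  obtain rfl : V = fun s u => W s * U (η⁻¹ * s) (η⁻¹ * u) * star (W u) := by
    funext s u
    rw [hV, hH₁.star_exp_ofReal_mul_I_smul, div_eq_inv_mul s, div_eq_inv_mul u]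
  have hHhat' (s : ℝ) :
      W s * (η⁻¹ • H (η⁻¹ * s)) * star (W s) - ((ε / η) * g s) • H₁ = η⁻¹ • Hhat s := by
    have hWH₁ : W s * H₁ * star (W s) = H₁ := hH₁.exp_ofReal_mul_I_smul_mul_self_mul_star _
    rw [hH, mul_inv_cancel_left₀ hη.ne', hHhat, ← hH₁.star_exp_ofReal_mul_I_smul]
    simp only [smul_add, mul_add, add_mul, mul_smul_comm, smul_mul_assoc, hWH₁]
    module
  obtain ⟨hunit, hone, hmul, hderiv⟩ :=
    (hU.comp_mul η⁻¹).conj_exp hH₁ (fun s => (hφ' s).const_mul (ε / η))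
  refine ⟨hunit, hone, hmul, fun u s => (hderiv u s).congr_deriv ?_⟩
  beta_reduce
  rw [hHhat', smul_mul_assoc, ← neg_smul, ← Complex.coe_smul, smul_smul]
  congr 1
  push_cast
  ring

/-- Let `H(t) := H₀ + ε·g(η·t)·H₁`, `φ(s) := ∫₀^s g`, `U` a unitary propagator for
`t ↦ H(t)`, and set `V(s,u) := e^{i(ε/η)φ(s)H₁}·U(s/η, u/η)·e^{−i(ε/η)φ(u)H₁}` and
`Ĥ(s) := e^{i(ε/η)φ(s)H₁}·H₀·e^{−i(ε/η)φ(s)H₁}`.  Then every `V(s,u)` is unitary,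
`V(s,s) = 1`, `V(s,r)·V(r,u) = V(s,u)`, and for each fixed `u` the map `s ↦ V(s,u)` is
differentiable in operator norm with `i·η·(d/ds)V(s,u) = Ĥ(s)·V(s,u)`, i.e. the
derivative is `(−i/η)·(Ĥ(s)·V(s,u))`. -/
theorem stmt_19 (H₀ H₁ : 𝓗 →L[ℂ] 𝓗) (hH₀ : IsSelfAdjoint H₀) (hH₁ : IsSelfAdjoint H₁)
    (ε η : ℝ) (hε : 0 < ε) (hη : 0 < η)
    (g : ℝ → ℝ) (hg : ContDiff ℝ 1 g) (hg0 : ∀ s ≤ (0 : ℝ), g s = 0)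
    (hg' : ∀ s ∉ Set.Ioo (0 : ℝ) 1, deriv g s = 0)
    (H : ℝ → 𝓗 →L[ℂ] 𝓗) (hH : ∀ t, H t = H₀ + (ε * g (η * t)) • H₁)
    (φ : ℝ → ℝ) (hφ : ∀ s, φ s = ∫ u in (0 : ℝ)..s, g u)
    (U : ℝ → ℝ → 𝓗 →L[ℂ] 𝓗) (hU : IsUnitaryPropagator H U)
    (V : ℝ → ℝ → 𝓗 →L[ℂ] 𝓗)
    (hV : ∀ s u, V s u =
      NormedSpace.exp (((((ε / η) * φ s : ℝ) : ℂ) * Complex.I) • H₁) * U (s / η) (u / η) *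
      NormedSpace.exp ((-((((ε / η) * φ u : ℝ) : ℂ) * Complex.I)) • H₁))
    (Hhat : ℝ → 𝓗 →L[ℂ] 𝓗)
    (hHhat : ∀ s, Hhat s =
      NormedSpace.exp (((((ε / η) * φ s : ℝ) : ℂ) * Complex.I) • H₁) * H₀ *
      NormedSpace.exp ((-((((ε / η) * φ s : ℝ) : ℂ) * Complex.I)) • H₁)) :
    (∀ s u, V s u ∈ unitary (𝓗 →L[ℂ] 𝓗)) ∧
    (∀ s, V s s = 1) ∧
    (∀ s r u, V s r * V r u = V s u) ∧
    (∀ u s, HasDerivAt (fun s' => V s' u)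
      (((-Complex.I) / (η : ℂ)) • (Hhat s * V s u)) s) :=
  stmt_19_general H₀ H₁ hH₁ ε η hη g hg H hH φ hφ U hU V hV Hhat hHhat
end
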